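/- arXiv:2309.05824 — 3 statements merged into one kernel-verified Lean document; each statement's English description precedes it below -/
import Mathlib

section
/- Let X be a locally compact metric space, p ∈ X, and g a homeomorphism of a neighbourhood of p onto a neighbourhood of p with g(p) = p. If g is topologically repelling at p (i.e., there is a neighbourhood U of p such that every forward g-orbit starting in U \ {p} eventually leaves U), then g⁻¹ is topologically attracting at p (i.e., there is a neighbourhood V of p on which the iterates g^[-n] converge uniformly to p as n → ∞). -/
/-!
Fix a compact neighbourhood `K` of `p` inside the repelling neighbourhood on which `g` is
continuous and `g⁻¹` is a right inverse of `g`. The sets of points whose first `N` forward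
iterates stay in `K` are compact and decreasing, and by repulsion their intersection is `{p}`;
hence they eventually lie in any given neighbourhood of `p`. If the first `n` backward iterates of
`x` stay in `K`, then `g^[-n] x` lies in the `n`-th of these sets, so it is uniformly close to `p`
for large `n`. Choosing `N` so that `g⁻¹` maps the `N`-th set into `K`, an induction shows that a
point whose first `N` backward iterates stay in `K` has its whole backward orbit in `K`; these
points form a neighbourhood of `p`.
-/

open Topology Filter Set Function

section Iterates

variable {X : Type*} {f g : X → X} {K : Set X}

def stayIn (f : X → X) (K : Set X) (N : ℕ) : Set X := {x | ∀ m ≤ N, f^[m] x ∈ K}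

lemma stayIn_antitone : Antitone (stayIn f K) :=
  fun _ _ hNM _ hx m hm => hx m (hm.trans hNM)

lemma mem_stayIn_succ_iff {x : X} {N : ℕ} :
    x ∈ stayIn f K (N + 1) ↔ x ∈ stayIn f K N ∧ f^[N + 1] x ∈ K := by
  simp only [stayIn, mem_ofPred_eq, Nat.le_succ_iff]
  grind

lemma stayIn_succ_eq_inter_preimage (N : ℕ) :
    stayIn f K (N + 1) = K ∩ f ⁻¹' stayIn f K N := by
  ext x
  simp only [stayIn, mem_inter_iff, mem_preimage, mem_ofPred_eq, ← iterate_succ_apply]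
  refine ⟨fun h => ⟨h 0 (Nat.zero_le _), fun m hm => h (m + 1) (by omega)⟩, fun ⟨h0, h⟩ m hm => ?_⟩
  cases m with
  | zero => exact h0
  | succ m => exact h m (by omega)

lemma iterate_iterate_eq_of_rightInvOn (h : RightInvOn g f K) {y : X} :
    ∀ {m : ℕ}, (∀ j < m, g^[j] y ∈ K) → f^[m] (g^[m] y) = y
  | 0, _ => rfl
  | m + 1, hy => by
    rw [iterate_succ_apply, iterate_succ_apply', h (hy m m.lt_succ_self)]
    exact iterate_iterate_eq_of_rightInvOn h fun j hj => hy j (by omega)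

lemma iterate_mem_stayIn_of_rightInvOn (h : RightInvOn g f K) {x : X} {n : ℕ}
    (hx : x ∈ stayIn g K n) : g^[n] x ∈ stayIn f K n := by
  intro m hm
  obtain ⟨k, rfl⟩ := Nat.exists_eq_add_of_le hm
  rw [iterate_add_apply, iterate_iterate_eq_of_rightInvOn h fun j hj => ?_]
  · exact hx k (by omega)
  · rw [← iterate_add_apply]; exact hx _ (by omega)

lemma stayIn_subset_stayIn_of_rightInvOn (h : RightInvOn g f K) {N : ℕ}
    (hN : stayIn f K N ⊆ g ⁻¹' K) (n : ℕ) : stayIn g K N ⊆ stayIn g K n := by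
  induction n with
  | zero => exact stayIn_antitone N.zero_le
  | succ n ih =>
    intro x hx
    rcases le_or_gt (n + 1) N with hnN | hNn
    · exact stayIn_antitone hnN hx
    · have hn : g^[n] x ∈ stayIn f K N :=
        stayIn_antitone (by omega) (iterate_mem_stayIn_of_rightInvOn h (ih hx))
      exact mem_stayIn_succ_iff.2 ⟨ih hx, by rw [iterate_succ_apply']; exact hN hn⟩

end Iterates

section Compactness

variable {X : Type*} [TopologicalSpace X] {f g : X → X} {K : Set X} {p : X}

lemma isClosed_stayIn (hK : IsClosed K) (hf : ContinuousOn f K) (N : ℕ) :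
    IsClosed (stayIn f K N) := by
  induction N with
  | zero => simpa [stayIn] using hK
  | succ N ih =>
    simpa only [stayIn_succ_eq_inter_preimage] using hf.preimage_isClosed_of_isClosed hK ih

lemma stayIn_mem_nhds (hg : ContinuousAt g p) (hgp : g p = p) (hK : K ∈ 𝓝 p) (N : ℕ) :
    stayIn g K N ∈ 𝓝 p :=
  (eventually_all_finite (finite_le_nat N)).2 fun m _ =>
    (hg.iterate hgp m).preimage_mem_nhds (by rwa [iterate_fixed hgp])

lemma exists_stayIn_subset [T2Space X] (hK : IsCompact K) (hf : ContinuousOn f K)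
    (hrep : ∀ x ∈ K, x ≠ p → ∃ n, f^[n] x ∉ K) {O : Set X} (hO : O ∈ 𝓝 p) :
    ∃ N, stayIn f K N ⊆ O := by
  refine exists_subset_nhds_of_isCompact stayIn_antitone.directed_ge
    (fun N => hK.of_isClosed_subset (isClosed_stayIn hK.isClosed hf N) fun x hx => ?_)
    fun x hx => ?_
  · exact hx 0 N.zero_le
  · by_cases hxp : x = p
    · exact hxp ▸ hO
    · obtain ⟨n, hn⟩ := hrep x (mem_iInter.1 hx 0 0 le_rfl) hxp
      exact absurd (mem_iInter.1 hx n n le_rfl) hn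

end Compactness

theorem exists_tendstoUniformlyOn_iterate_of_repelling {X : Type*} [UniformSpace X] [T2Space X]
    {f g : X → X} {K : Set X} {p : X} (hK : IsCompact K) (hKp : K ∈ 𝓝 p)
    (hf : ContinuousOn f K) (hg : ContinuousAt g p) (hgp : g p = p) (hinv : RightInvOn g f K)
    (hrep : ∀ x ∈ K, x ≠ p → ∃ n, f^[n] x ∉ K) :
    ∃ V ∈ 𝓝 p, TendstoUniformlyOn (fun n x => g^[n] x) (fun _ => p) atTop V := by
  obtain ⟨N, hN⟩ := exists_stayIn_subset hK hf hrep (hg.preimage_mem_nhds (hgp ▸ hKp))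
  refine ⟨stayIn g K N, stayIn_mem_nhds hg hgp hKp N, tendsto_prod_principal_iff.1 ?_⟩
  intro O hO
  obtain ⟨M, hM⟩ := exists_stayIn_subset hK hf hrep hO
  refine eventually_prod_principal_iff.2 ((eventually_ge_atTop M).mono fun n hn x hx => ?_)
  exact hM (stayIn_antitone hn (iterate_mem_stayIn_of_rightInvOn hinv
    (stayIn_subset_stayIn_of_rightInvOn hinv hN n hx)))

/-- Let `X` be a locally compact metric space, `p ∈ X`, and `g` a homeomorphism of a
neighbourhood `W` of `p` onto a neighbourhood of `p` (with local inverse `ginv`), fixing `p`.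
If `g` is topologically repelling at `p` (all orbits in `U \ {p}` escape `U` for some
neighbourhood `U`), then `g⁻¹` is topologically attracting at `p`: its iterates converge
uniformly to `p` on some neighbourhood `V` of `p`. -/
theorem stmt2 {X : Type*} [MetricSpace X] [LocallyCompactSpace X] (p : X)
    (g ginv : X → X) (W : Set X) (hW : W ∈ 𝓝 p)
    (hgc : ContinuousOn g W) (hginvc : ContinuousOn ginv W)
    (hWnbhd : g '' W ∈ 𝓝 p)
    (hinv1 : ∀ x ∈ W, ginv (g x) = x) (hinv2 : ∀ x ∈ g '' W, g (ginv x) = x)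
    (hfix : g p = p)
    (hrep : ∃ U ∈ 𝓝 p, ∀ x ∈ U, x ≠ p → ∃ n : ℕ, g^[n] x ∉ U) :
    ∃ V ∈ 𝓝 p, TendstoUniformlyOn (fun n x => ginv^[n] x) (fun _ => p) Filter.atTop V := by
  obtain ⟨U, hU, hrepU⟩ := hrep
  obtain ⟨K, hKp, hKsub, hK⟩ := local_compact_nhds (inter_mem (inter_mem hU hW) hWnbhd)
  have hginvp : ginv p = p := by simpa [hfix] using hinv1 p (mem_of_mem_nhds hW)
  refine exists_tendstoUniformlyOn_iterate_of_repelling hK hKp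
    (hgc.mono fun x hx => (hKsub hx).1.2) (hginvc.continuousAt hW) hginvp
    (fun x hx => hinv2 x (hKsub hx).2) fun x hx hxp => ?_
  obtain ⟨n, hn⟩ := hrepU x (hKsub hx).1.1 hxp
  exact ⟨n, fun h => hn (hKsub h).1.1⟩
end

section
/- Define σ₁ = 1 and, for r ≥ 2, σ_r = d · Σ_{k=2}^{r} Σ_{r₁+⋯+r_k = r, r_i ≥ 1} σ_{r₁} ⋯ σ_{r_k}, where d ≥ 1 is a fixed positive integer. Then there exists a constant C > 0 such that σ_r ≤ C^r for all r ≥ 1; equivalently, sup_{r ≥ 1} (1/r)·log σ_r < ∞. -/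
/-!
Siegel's majorant trick. The weight `u n = 1 / (8 n²)` dominates its own convolution square,
because `1/(a² b²) ≤ 2 (1/a² + 1/b²) / (a+b)²` and `∑ 1/n² ≤ 2`; hence every convolution power
of `u` is again bounded by `u`. Writing `q = 1/(d+1)` and `M = 8 (d+1)`, strong induction then
shows `σ_r ≤ q M^r u r`: the recursion bounds `σ_r` by `d ∑_{k ≥ 2} q^k M^r u r`, and
`d ∑_{k ≥ 2} q^k ≤ q`.
-/

open Finset

section ConvolutionPowers

variable {R : Type*} [CommSemiring R]

def convPow (f : ℕ → R) (k r : ℕ) : R := ∑ c ∈ finAntidiagonal k r, ∏ i, f (c i)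

theorem convPow_one (f : ℕ → R) (r : ℕ) : convPow f 1 r = f r := by
  have : finAntidiagonal 1 r = {fun _ => r} := by
    ext c
    simp [funext_iff, Fin.forall_fin_one]
  simp [convPow, this]

/-- `finAntidiagonal` is defined by exactly this recursion on the number of parts. -/
theorem convPow_succ (f : ℕ → R) (k r : ℕ) :
    convPow f (k + 1) r = ∑ ab ∈ antidiagonal r, f ab.1 * convPow f k ab.2 := by
  simp only [convPow, finAntidiagonal, finAntidiagonal.aux, sum_disjiUnion, sum_map, mul_sum]
  simp [Fin.prod_univ_succ]

theorem convPow_mul_pow (f : ℕ → R) (c M : R) (k r : ℕ) :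
    convPow (fun n => c * M ^ n * f n) k r = c ^ k * M ^ r * convPow f k r := by
  simp only [convPow, mul_sum, prod_mul_distrib, prod_const, card_univ, Fintype.card_fin]
  refine sum_congr rfl fun x hx => ?_
  rw [prod_pow_eq_pow_sum, mem_finAntidiagonal.1 hx]

theorem convPow_le_of_sum_antidiagonal_le [PartialOrder R] [IsOrderedRing R] {u : ℕ → R}
    (hu : ∀ n, 0 ≤ u n) (hconv : ∀ r, ∑ ab ∈ antidiagonal r, u ab.1 * u ab.2 ≤ u r) :
    ∀ k r, convPow u (k + 1) r ≤ u r
  | 0, r => (convPow_one u r).le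
  | k + 1, r => calc
      convPow u (k + 2) r = ∑ ab ∈ antidiagonal r, u ab.1 * convPow u (k + 1) ab.2 :=
        convPow_succ u (k + 1) r
      _ ≤ ∑ ab ∈ antidiagonal r, u ab.1 * u ab.2 := by
        gcongr with ab
        · exact hu _
        · exact convPow_le_of_sum_antidiagonal_le hu hconv k ab.2
      _ ≤ u r := hconv r

end ConvolutionPowers

/-- Since `(0 : ℝ)⁻¹ = 0`, the terms with `a = 0` or `b = 0` vanish. -/
theorem sum_antidiagonal_inv_sq_mul_inv_sq_le (r : ℕ) :
    ∑ ab ∈ antidiagonal r, ((ab.1 : ℝ) ^ 2)⁻¹ * ((ab.2 : ℝ) ^ 2)⁻¹ ≤ 8 * ((r : ℝ) ^ 2)⁻¹ := by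
  have pointwise : ∀ ab ∈ antidiagonal r, ((ab.1 : ℝ) ^ 2)⁻¹ * ((ab.2 : ℝ) ^ 2)⁻¹
      ≤ 2 * ((r : ℝ) ^ 2)⁻¹ * (((ab.1 : ℝ) ^ 2)⁻¹ + ((ab.2 : ℝ) ^ 2)⁻¹) := by
    rintro ⟨a, b⟩ hab
    rw [HasAntidiagonal.mem_antidiagonal] at hab
    subst hab
    rcases Nat.eq_zero_or_pos a with rfl | ha
    · rw [Nat.cast_zero, zero_pow two_ne_zero, inv_zero, zero_mul]
      positivity
    rcases Nat.eq_zero_or_pos b with rfl | hb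
    · rw [Nat.cast_zero, zero_pow two_ne_zero, inv_zero, mul_zero]
      positivity
    have ha' : (0 : ℝ) < a := by exact_mod_cast ha
    have hb' : (0 : ℝ) < b := by exact_mod_cast hb
    have gap : 2 * ((a + b : ℝ) ^ 2)⁻¹ * ((a ^ 2 : ℝ)⁻¹ + (b ^ 2 : ℝ)⁻¹)
        - (a ^ 2 : ℝ)⁻¹ * (b ^ 2 : ℝ)⁻¹ = (a - b) ^ 2 / ((a + b) ^ 2 * a ^ 2 * b ^ 2) := by
      field_simp
      ring
    push_cast
    rw [← sub_nonneg, gap]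
    positivity
  have sum_le_two : ∑ i ∈ range (r + 1), ((i : ℝ) ^ 2)⁻¹ ≤ 2 := by
    rw [range_eq_Ico, sum_eq_sum_Ico_succ_bot (Nat.succ_pos r), Ico_add_one_left_eq_Ioo]
    simpa using sum_Ioo_inv_sq_le (α := ℝ) 0 (r + 1)
  calc ∑ ab ∈ antidiagonal r, ((ab.1 : ℝ) ^ 2)⁻¹ * ((ab.2 : ℝ) ^ 2)⁻¹
      ≤ ∑ ab ∈ antidiagonal r,
          2 * ((r : ℝ) ^ 2)⁻¹ * (((ab.1 : ℝ) ^ 2)⁻¹ + ((ab.2 : ℝ) ^ 2)⁻¹) :=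
        sum_le_sum pointwise
    _ = 2 * ((r : ℝ) ^ 2)⁻¹ * (∑ i ∈ range (r + 1), ((i : ℝ) ^ 2)⁻¹
          + ∑ i ∈ range (r + 1), ((i : ℝ) ^ 2)⁻¹) := by
        rw [← mul_sum, sum_add_distrib, Nat.sum_antidiagonal_eq_sum_range_succ_mk,
          ← Nat.sum_antidiagonal_swap, Nat.sum_antidiagonal_eq_sum_range_succ_mk]
        rfl
    _ ≤ 2 * ((r : ℝ) ^ 2)⁻¹ * (2 + 2) := by gcongr
    _ = 8 * ((r : ℝ) ^ 2)⁻¹ := by ring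

def positiveCompositions (k r : ℕ) : Finset (Fin k → ℕ) :=
  {c ∈ Fintype.piFinset fun _ => range (r + 1) | (∀ i, 1 ≤ c i) ∧ ∑ i, c i = r}

theorem lt_of_mem_positiveCompositions {k r : ℕ} (hk : 2 ≤ k) {c : Fin k → ℕ}
    (hc : c ∈ positiveCompositions k r) (i : Fin k) : c i < r := by
  obtain ⟨hpos, rfl⟩ := (mem_filter.1 hc).2
  have : Nontrivial (Fin k) := Fin.nontrivial_iff_two_le.2 hk
  obtain ⟨j, hj⟩ := exists_ne i
  exact single_lt_sum hj (mem_univ i) (mem_univ j) (hpos j) fun _ _ _ => Nat.zero_le _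

theorem positiveCompositions_subset_finAntidiagonal (k r : ℕ) :
    positiveCompositions k r ⊆ finAntidiagonal k r :=
  fun _ hc => mem_finAntidiagonal.2 (mem_filter.1 hc).2.2

theorem sum_positiveCompositions_prod_nonneg {σ : ℕ → ℝ} {k r : ℕ} (hk : 2 ≤ k)
    (hσ : ∀ n, 1 ≤ n → n < r → 0 ≤ σ n) :
    0 ≤ ∑ c ∈ positiveCompositions k r, ∏ i, σ (c i) :=
  sum_nonneg fun _ hc => prod_nonneg fun i _ =>
    hσ _ ((mem_filter.1 hc).2.1 i) (lt_of_mem_positiveCompositions hk hc i)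

theorem sum_positiveCompositions_prod_le_convPow {σ g : ℕ → ℝ} {k r : ℕ} (hk : 2 ≤ k)
    (hg : ∀ n, 0 ≤ g n) (hσ : ∀ n, 1 ≤ n → n < r → 0 ≤ σ n ∧ σ n ≤ g n) :
    ∑ c ∈ positiveCompositions k r, ∏ i, σ (c i) ≤ convPow g k r := by
  have bounds : ∀ c ∈ positiveCompositions k r, ∀ i, 0 ≤ σ (c i) ∧ σ (c i) ≤ g (c i) :=
    fun c hc i => hσ _ ((mem_filter.1 hc).2.1 i) (lt_of_mem_positiveCompositions hk hc i)
  calc ∑ c ∈ positiveCompositions k r, ∏ i, σ (c i)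
      ≤ ∑ c ∈ positiveCompositions k r, ∏ i, g (c i) :=
        sum_le_sum fun c hc => prod_le_prod (fun i _ => (bounds c hc i).1)
          fun i _ => (bounds c hc i).2
    _ ≤ convPow g k r :=
        sum_le_sum_of_subset_of_nonneg (positiveCompositions_subset_finAntidiagonal k r)
          fun c _ _ => prod_nonneg fun i _ => hg _

/-- Telescoping: `d x^k = x^(k-1) - x^k` for `x = 1/(d+1)`. -/
theorem mul_sum_Icc_two_inv_pow_le (d r : ℕ) :
    (d : ℝ) * ∑ k ∈ Icc 2 r, ((d + 1 : ℝ)⁻¹) ^ k ≤ (d + 1 : ℝ)⁻¹ := by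
  set x : ℝ := (d + 1 : ℝ)⁻¹
  have hx : 0 ≤ x := by positivity
  rcases Nat.lt_or_ge r 1 with hr | hr
  · simp [Icc_eq_empty (show ¬2 ≤ r by omega), hx]
  suffices (d : ℝ) * ∑ k ∈ Icc 2 r, x ^ k + x ^ r ≤ x by linarith [pow_nonneg hx r]
  induction r, hr using Nat.le_induction with
  | base => simp
  | succ r hr ih =>
    have step : (d + 1 : ℝ) * x ^ (r + 1) = x ^ r := by
      rw [pow_succ, mul_left_comm, mul_inv_cancel₀ (by positivity), mul_one]
    rw [sum_Icc_succ_top (by omega)]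
    linarith

theorem le_geometric_majorant_of_recursion {d : ℕ} {σ u : ℕ → ℝ} {M : ℝ} (hσ1 : σ 1 = 1)
    (hrec : ∀ r, 2 ≤ r →
      σ r = d * ∑ k ∈ Icc 2 r, ∑ c ∈ positiveCompositions k r, ∏ i, σ (c i))
    (hu : ∀ n, 0 ≤ u n) (hconv : ∀ r, ∑ ab ∈ antidiagonal r, u ab.1 * u ab.2 ≤ u r)
    (hMu : (d + 1 : ℝ) ≤ M * u 1) :
    ∀ r, 1 ≤ r → 0 ≤ σ r ∧ σ r ≤ (d + 1 : ℝ)⁻¹ * M ^ r * u r := by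
  set q : ℝ := (d + 1 : ℝ)⁻¹
  have hM : 0 ≤ M :=
    (pos_of_mul_pos_left ((by positivity : (0 : ℝ) < d + 1).trans_le hMu) (hu 1)).le
  have hg : ∀ n, 0 ≤ q * M ^ n * u n := fun n => by have := hu n; positivity
  intro r
  induction r using Nat.strong_induction_on with | _ r ih => ?_
  intro hr
  obtain rfl | hr := hr.eq_or_lt
  · refine ⟨hσ1.ge.trans' zero_le_one, ?_⟩
    rw [hσ1, pow_one, mul_assoc, inv_mul_eq_div, one_le_div (by positivity)]
    exact hMu
  rw [hrec r hr]
  constructor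
  · exact mul_nonneg d.cast_nonneg <| sum_nonneg fun k hk =>
      sum_positiveCompositions_prod_nonneg (mem_Icc.1 hk).1 fun n hn hnr => (ih n hnr hn).1
  calc (d : ℝ) * ∑ k ∈ Icc 2 r, ∑ c ∈ positiveCompositions k r, ∏ i, σ (c i)
      ≤ d * ∑ k ∈ Icc 2 r, q ^ k * (M ^ r * u r) := by
        gcongr with k hk
        obtain ⟨k, rfl⟩ := Nat.exists_eq_add_of_le' (mem_Icc.1 hk).1
        calc ∑ c ∈ positiveCompositions (k + 2) r, ∏ i, σ (c i)
            ≤ convPow (fun n => q * M ^ n * u n) (k + 2) r :=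
              sum_positiveCompositions_prod_le_convPow (by omega) hg fun n hn hnr => ih n hnr hn
          _ ≤ q ^ (k + 2) * (M ^ r * u r) := by
              rw [convPow_mul_pow, mul_assoc]
              gcongr
              exact convPow_le_of_sum_antidiagonal_le hu hconv (k + 1) r
    _ = (d * ∑ k ∈ Icc 2 r, q ^ k) * (M ^ r * u r) := by rw [mul_assoc, sum_mul]
    _ ≤ q * (M ^ r * u r) := by
        have := hu r
        gcongr
        exact mul_sum_Icc_two_inv_pow_le d r
    _ = q * M ^ r * u r := (mul_assoc _ _ _).symm

theorem stmt13_general (d : ℕ) (σ : ℕ → ℝ) (hσ1 : σ 1 = 1)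
    (hrec : ∀ r : ℕ, 2 ≤ r →
      σ r = d * ∑ k ∈ Finset.Icc 2 r,
        ∑ c ∈ Finset.filter
            (fun c : Fin k → ℕ => (∀ i, 1 ≤ c i) ∧ ∑ i, c i = r)
            (Fintype.piFinset fun _ : Fin k => Finset.range (r + 1)),
          ∏ i, σ (c i)) :
    ∃ C > (0 : ℝ), ∀ r : ℕ, 1 ≤ r → σ r ≤ C ^ r := by
  set u : ℕ → ℝ := fun n => ((n : ℝ) ^ 2)⁻¹ / 8
  have hconv : ∀ r, ∑ ab ∈ antidiagonal r, u ab.1 * u ab.2 ≤ u r := fun r => by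
    simp only [u, div_mul_div_comm, ← sum_div]
    rw [div_le_div_iff₀ (by norm_num) (by norm_num)]
    linarith [sum_antidiagonal_inv_sq_mul_inv_sq_le r]
  have hMu : (d + 1 : ℝ) ≤ 8 * (d + 1) * u 1 := le_of_eq (by simp only [u]; ring)
  refine ⟨8 * (d + 1), by positivity, fun r hr => ?_⟩
  have hur : u r ≤ 1 := by
    have : ((r : ℝ) ^ 2)⁻¹ ≤ 1 := inv_le_one_of_one_le₀ (one_le_pow₀ (by exact_mod_cast hr))
    simp only [u]
    linarith
  calc σ r ≤ (d + 1 : ℝ)⁻¹ * (8 * (d + 1)) ^ r * u r :=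
        (le_geometric_majorant_of_recursion hσ1 hrec (fun n => by positivity) hconv hMu r hr).2
    _ ≤ 1 * (8 * (d + 1)) ^ r * 1 := by
        gcongr
        exact inv_le_one_of_one_le₀ (by simp)
    _ = (8 * (d + 1)) ^ r := by ring

/-- The Siegel–Sternberg majorant coefficients `σ_r`, defined by `σ_1 = 1` and
`σ_r = d · Σ_{k=2}^r Σ_{r₁+⋯+r_k=r, r_i ≥ 1} σ_{r₁} ⋯ σ_{r_k}` for `r ≥ 2`,
grow at most geometrically: `σ_r ≤ C^r` for some `C > 0`. -/
theorem stmt13 (d : ℕ) (hd : 1 ≤ d) (σ : ℕ → ℝ) (hσ1 : σ 1 = 1)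
    (hrec : ∀ r : ℕ, 2 ≤ r →
      σ r = d * ∑ k ∈ Finset.Icc 2 r,
        ∑ c ∈ Finset.filter
            (fun c : Fin k → ℕ => (∀ i, 1 ≤ c i) ∧ ∑ i, c i = r)
            (Fintype.piFinset fun _ : Fin k => Finset.range (r + 1)),
          ∏ i, σ (c i)) :
    ∃ C > (0 : ℝ), ∀ r : ℕ, 1 ≤ r → σ r ≤ C ^ r :=
  stmt13_general d σ hσ1 hrec
end

section
/- Let f : ℂ → ℂ be holomorphic and injective on a disc D_r around 0 with f(0) = 0 and f(D_r) ⊆ D_r, with multiplier λ = f'(0), |λ| = 1. Suppose 0 is a stable fixed point, i.e., for every neighbourhood U ⊆ D_r of 0 there is a neighbourhood V of 0 with f^[n](V) ⊆ U for all n ∈ ℕ. Then f is holomorphically linearisable at 0: there exists a holomorphic germ φ at 0 with φ(0) = 0, φ'(0) = 1, and φ ∘ f = λ·φ near 0. -/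
/-!
The Cesàro averages `φ_k = (1/k) Σ_{j<k} λ⁻ʲ f^[j]` are holomorphic on a neighbourhood of `0`
whose orbits stay in the disc, hence uniformly bounded there (as `‖λ‖ = 1`), with `φ_k(0) = 0`
and `φ_k'(0) = 1`. By Cauchy's estimate they are equicontinuous, so along an ultrafilter finer
than `atTop` (this replaces the extraction of a subsequence) they converge locally uniformly to a
holomorphic `φ` with `φ(0) = 0` and `φ'(0) = 1`. Telescoping gives
`φ_k ∘ f - λ φ_k = (λ/k)(λ⁻ᵏ f^[k] - id)`, which tends to `0` since orbits are bounded,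
so `φ ∘ f = λ φ`.
-/

open Topology Filter Metric Set

theorem EquicontinuousOn.tendstoUniformlyOn_of_tendsto {ι X α : Type*} [TopologicalSpace X]
    [UniformSpace α] {F : ι → X → α} {K : Set X} (hK : IsCompact K) (hF : EquicontinuousOn F K)
    {ℱ : Filter ι} {f : X → α} (h : ∀ x ∈ K, Tendsto (F · x) ℱ (𝓝 (f x))) :
    TendstoUniformlyOn F f ℱ K := by
  have := (EquicontinuousOn.tendsto_uniformOnFun_iff_pi' (𝔖 := {K}) (by simpa) (by simpa) ℱ f).2
    (by simpa [tendsto_pi_nhds] using fun x hx => h x hx)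
  exact UniformOnFun.tendsto_iff_tendstoUniformlyOn.1 this K rfl

namespace Complex

variable {ι E F : Type*} [NormedAddCommGroup E] [NormedSpace ℂ E] [NormedAddCommGroup F]
  [NormedSpace ℂ F]

theorem equicontinuousAt_of_forall_norm_le {G : ι → E → F} {c : E} {R M : ℝ} (hR : 0 < R)
    (hG : ∀ i, DifferentiableOn ℂ (G i) (ball c R)) (hM : ∀ i, ∀ z ∈ ball c R, ‖G i z‖ ≤ M) :
    EquicontinuousAt G c := by
  refine Metric.equicontinuousAt_of_continuity_modulus (fun z => (M + M) / R * dist z c) ?_ G ?_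
  · exact ((continuous_id.dist continuous_const).const_mul _).tendsto' c 0 (by simp)
  · filter_upwards [ball_mem_nhds c hR] with z hz i
    rw [dist_comm]
    refine dist_le_div_mul_dist_of_mapsTo_ball (hG i) (fun w hw => ?_) hz
    exact mem_closedBall.2 <| (dist_le_norm_add_norm _ _).trans
      (add_le_add (hM i w hw) (hM i c (mem_ball_self hR)))

/-- Montel's theorem, in the form of convergence along an ultrafilter. -/
theorem exists_tendstoLocallyUniformlyOn_of_forall_norm_le [LocallyCompactSpace E]
    [ProperSpace F] (𝒰 : Ultrafilter ι) {G : ι → E → F} {U : Set E} (hU : IsOpen U) {M : ℝ}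
    (hG : ∀ i, DifferentiableOn ℂ (G i) U) (hM : ∀ i, ∀ z ∈ U, ‖G i z‖ ≤ M) :
    ∃ g, TendstoLocallyUniformlyOn G g 𝒰 U := by
  have hlim : ∀ z ∈ U, ∃ w, Tendsto (G · z) 𝒰 (𝓝 w) := fun z hz => by
    obtain ⟨w, -, hw⟩ := (isCompact_closedBall (0 : F) M).ultrafilter_le_nhds' (𝒰.map (G · z))
      (Ultrafilter.mem_map.2 <| univ_mem' fun i => mem_closedBall_zero_iff.2 (hM i z hz))
    exact ⟨w, hw⟩
  choose! g hg using hlim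
  have hequi : EquicontinuousOn G U := fun c hc => by
    obtain ⟨R, hR, hRU⟩ := Metric.isOpen_iff.1 hU c hc
    exact (equicontinuousAt_of_forall_norm_le hR (fun i => (hG i).mono hRU)
      fun i z hz => hM i z (hRU hz)).equicontinuousWithinAt U
  exact ⟨g, (tendstoLocallyUniformlyOn_iff_forall_isCompact hU).2 fun K hKU hK =>
    (hequi.mono hKU).tendstoUniformlyOn_of_tendsto hK fun z hz => hg z (hKU hz)⟩

end Complex

section Cesaro

variable {𝕜 : Type*}

def cesaroAverage [Field 𝕜] (f : 𝕜 → 𝕜) (l : 𝕜) (k : ℕ) (z : 𝕜) : 𝕜 :=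
  (k : 𝕜)⁻¹ * ∑ j ∈ Finset.range k, l⁻¹ ^ j * f^[j] z

theorem cesaroAverage_comp_sub_mul [Field 𝕜] {f : 𝕜 → 𝕜} {l : 𝕜} (hl : l ≠ 0)
    (k : ℕ) (z : 𝕜) :
    cesaroAverage f l k (f z) - l * cesaroAverage f l k z =
      l * (k : 𝕜)⁻¹ * (l⁻¹ ^ k * f^[k] z - z) := by
  have hshift : ∀ j, l⁻¹ ^ j * f^[j] (f z) = l * (l⁻¹ ^ (j + 1) * f^[j + 1] z) := fun j => by
    rw [Function.iterate_succ_apply, pow_succ]; field_simp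
  have := Finset.sum_range_sub (fun j => l⁻¹ ^ j * f^[j] z) k
  simp only [pow_zero, one_mul, Function.iterate_zero_apply] at this
  simp only [cesaroAverage, hshift, ← this, ← Finset.mul_sum, Finset.sum_sub_distrib]
  ring

theorem cesaroAverage_apply_zero [Field 𝕜] {f : 𝕜 → 𝕜} (hf : f 0 = 0) (l : 𝕜) (k : ℕ) :
    cesaroAverage f l k 0 = 0 := by
  simp [cesaroAverage, Function.iterate_fixed hf]

theorem norm_cesaroAverage_le [RCLike 𝕜] {f : 𝕜 → 𝕜} {l : 𝕜} (hl : ‖l‖ = 1)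
    {z : 𝕜} {M : ℝ} (hM : ∀ j, ‖f^[j] z‖ ≤ M) (k : ℕ) :
    ‖cesaroAverage f l k z‖ ≤ M := by
  rcases k.eq_zero_or_pos with rfl | hk
  · simpa [cesaroAverage] using (norm_nonneg z).trans (hM 0)
  have hsum : ‖∑ j ∈ Finset.range k, l⁻¹ ^ j * f^[j] z‖ ≤ k * M :=
    (norm_sum_le_of_le _ fun j _ => by simpa [hl] using hM j).trans_eq (by simp)
  rw [cesaroAverage, norm_mul, norm_inv, RCLike.norm_natCast]
  calc (k : ℝ)⁻¹ * _ ≤ (k : ℝ)⁻¹ * (k * M) := by gcongr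
    _ = M := by field_simp

theorem tendsto_cesaroAverage_comp_sub_mul [RCLike 𝕜] {f : 𝕜 → 𝕜} {l : 𝕜} (hl : ‖l‖ = 1)
    {z : 𝕜} {M : ℝ} (hM : ∀ j, ‖f^[j] z‖ ≤ M) :
    Tendsto (fun k => cesaroAverage f l k (f z) - l * cesaroAverage f l k z) atTop (𝓝 0) := by
  have hl0 : l ≠ 0 := norm_ne_zero_iff.1 (by simp [hl])
  simp only [cesaroAverage_comp_sub_mul hl0]
  refine squeeze_zero_norm (a := fun k : ℕ => (k : ℝ)⁻¹ * (M + M)) (fun k => ?_) ?_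
  · rw [norm_mul, norm_mul, hl, one_mul, norm_inv, RCLike.norm_natCast]
    gcongr
    refine (norm_sub_le _ _).trans (add_le_add ?_ (hM 0))
    simpa [hl] using hM k
  · simpa using tendsto_inv_atTop_nhds_zero_nat.mul_const (M + M)

theorem hasDerivAt_cesaroAverage [NontriviallyNormedField 𝕜] [CharZero 𝕜]
    {f : 𝕜 → 𝕜} {l x : 𝕜} (hf : HasDerivAt f l x) (hx : f x = x) (hl : l ≠ 0) {k : ℕ}
    (hk : k ≠ 0) : HasDerivAt (cesaroAverage f l k) 1 x := by
  have := (HasDerivAt.fun_sum fun j (_ : j ∈ Finset.range k) =>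
    (HasDerivAt.iterate x hf hx j).const_mul (l⁻¹ ^ j)).const_mul (k : 𝕜)⁻¹
  refine this.congr_deriv ?_
  simp [inv_mul_cancel₀ (pow_ne_zero _ hl), hk]

theorem DifferentiableOn.cesaroAverage [NontriviallyNormedField 𝕜] {f : 𝕜 → 𝕜}
    {s : Set 𝕜} (hf : DifferentiableOn 𝕜 f s) (hs : MapsTo f s s) (l : 𝕜) (k : ℕ) :
    DifferentiableOn 𝕜 (cesaroAverage f l k) s :=
  .const_mul (.fun_sum fun j _ => (hf.iterate hs j).const_mul _) _

end Cesaro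

theorem stmt14_general (r : ℝ) (hr : 0 < r) (f : ℂ → ℂ)
    (hf : DifferentiableOn ℂ f (Metric.ball 0 r))
    (hf0 : f 0 = 0)
    (l : ℂ) (hl : deriv f 0 = l) (hmod : ‖l‖ = 1)
    (hstab : ∀ U ∈ 𝓝 (0 : ℂ), U ⊆ Metric.ball 0 r →
      ∃ V ∈ 𝓝 (0 : ℂ), ∀ n : ℕ, ∀ z ∈ V, f^[n] z ∈ U) :
    ∃ φ : ℂ → ℂ, AnalyticAt ℂ φ 0 ∧ φ 0 = 0 ∧ deriv φ 0 = 1 ∧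
      ∀ᶠ z in 𝓝 (0 : ℂ), φ (f z) = l * φ z := by
  set S : Set ℂ := {z | ∀ n, f^[n] z ∈ ball 0 r}
  have hS : S ∈ 𝓝 0 := by
    obtain ⟨V, hV, hVS⟩ := hstab _ (ball_mem_nhds 0 hr) subset_rfl
    exact mem_of_superset hV fun z hz n => hVS n z hz
  have hSf : MapsTo f S S := fun z hz n => by
    simpa only [← Function.iterate_succ_apply] using hz (n + 1)
  have horbit : ∀ z ∈ S, ∀ j, ‖f^[j] z‖ ≤ r := fun z hz j => (mem_ball_zero_iff.1 (hz j)).le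
  obtain ⟨ρ, hρ, hρS⟩ := Metric.mem_nhds_iff.1 hS
  have hdiff k : DifferentiableOn ℂ (cesaroAverage f l k) (ball 0 ρ) :=
    ((hf.mono fun z (hz : z ∈ S) => hz 0).cesaroAverage hSf l k).mono hρS
  set 𝒰 := Ultrafilter.of (atTop : Filter ℕ)
  obtain ⟨φ, hφ⟩ := Complex.exists_tendstoLocallyUniformlyOn_of_forall_norm_le 𝒰 isOpen_ball hdiff
    fun k z hz => norm_cesaroAverage_le hmod (horbit z (hρS hz)) k
  have hl0 : l ≠ 0 := norm_ne_zero_iff.1 (by simp [hmod])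
  have hf' : HasDerivAt f l 0 := hl ▸ (hf.differentiableAt (ball_mem_nhds 0 hr)).hasDerivAt
  refine ⟨φ, (hφ.differentiableOn (.of_forall hdiff) isOpen_ball).analyticAt (ball_mem_nhds 0 hρ),
    tendsto_nhds_unique (hφ.tendsto_at (mem_ball_self hρ)) ?_, ?_, ?_⟩
  · simp [cesaroAverage_apply_zero hf0]
  · refine tendsto_nhds_unique ((hφ.deriv (.of_forall hdiff) isOpen_ball).tendsto_at
      (mem_ball_self hρ)) (tendsto_const_nhds.congr' ?_)
    filter_upwards [Ultrafilter.of_le _ (eventually_ne_atTop 0)] with k hk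
    exact (hasDerivAt_cesaroAverage hf' hf0 hl0 hk).deriv.symm
  · filter_upwards [ball_mem_nhds 0 hρ, hf'.continuousAt.preimage_mem_nhds (t := ball 0 ρ)
      (by rw [hf0]; exact ball_mem_nhds 0 hρ)] with z hz hfz
    exact sub_eq_zero.1 <| tendsto_nhds_unique
      ((hφ.tendsto_at hfz).sub ((hφ.tendsto_at hz).const_mul l))
      ((tendsto_cesaroAverage_comp_sub_mul hmod (horbit z (hρS hz))).mono_left
        (Ultrafilter.of_le _))

/-- A neutral (`‖f'(0)‖ = 1`) injective holomorphic germ with a stable fixed point `0` is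
holomorphically linearisable: there is a holomorphic `φ` near `0` with `φ(0) = 0`,
`φ'(0) = 1` and `φ ∘ f = l·φ` near `0`. -/
theorem stmt14 (r : ℝ) (hr : 0 < r) (f : ℂ → ℂ)
    (hf : DifferentiableOn ℂ f (Metric.ball 0 r))
    (hinj : Set.InjOn f (Metric.ball 0 r))
    (hf0 : f 0 = 0)
    (hmaps : Set.MapsTo f (Metric.ball 0 r) (Metric.ball 0 r))
    (l : ℂ) (hl : deriv f 0 = l) (hmod : ‖l‖ = 1)
    (hstab : ∀ U ∈ 𝓝 (0 : ℂ), U ⊆ Metric.ball 0 r →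
      ∃ V ∈ 𝓝 (0 : ℂ), ∀ n : ℕ, ∀ z ∈ V, f^[n] z ∈ U) :
    ∃ φ : ℂ → ℂ, AnalyticAt ℂ φ 0 ∧ φ 0 = 0 ∧ deriv φ 0 = 1 ∧
      ∀ᶠ z in 𝓝 (0 : ℂ), φ (f z) = l * φ z :=
  stmt14_general r hr f hf hf0 l hl hmod hstab
end
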